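/- For all natural numbers n and k with k \leq n, the following finite sum identity holds: \sum_{m=0}^{n-k} (-1)^{n-m-k} \binom{n}{m} \binom{n-m}{k} m^m (1+m)^{n-m-k} = \binom{n}{k} \, \mathcal{T}_{n-k}(k - n - 1); equivalently, the k-th coefficient of the Taylor expansion of \mathcal{T}_n(z) around z = -n-1 equals \binom{n}{k} \mathcal{T}_{n-k}(k-n-1). -/

import Mathlib

/-!
The identity holds summand by summand: at `z = k - n - 1` the base `(n - k - m) + z` of the
`m`-th summand of `𝒯_{n-k}` is `-(1 + m)`, and `C(n, m) C(n - m, k) = C(n, k) C(n - k, m)`.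
-/

open Finset

/-- The polynomial `𝒯 n z = ∑_{m=0}^{n} C(n,m) m^m (n-m+z)^(n-m)` (with `0^0 = 1`). -/
noncomputable def calT (n : ℕ) (z : ℂ) : ℂ :=
  ∑ m ∈ Finset.range (n + 1),
    (n.choose m : ℂ) * (m : ℂ) ^ m * (((n - m : ℕ) : ℂ) + z) ^ (n - m)

theorem Nat.choose_mul_choose_sub_comm (n m k : ℕ) :
    n.choose m * (n - m).choose k = n.choose k * (n - k).choose m := by
  -- both sides equal `C(n, m + k) C(m + k, m)`
  have hm := Nat.choose_mul (n := n) (Nat.le_add_right m k)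
  have hk := Nat.choose_mul (n := n) (Nat.le_add_left k m)
  rw [Nat.add_sub_cancel_left] at hm
  rw [Nat.add_sub_cancel] at hk
  rw [← hm, ← hk, Nat.choose_symm_add]

theorem taylor_coeff_calT (n k : ℕ) (hk : k ≤ n) :
    ∑ m ∈ Finset.range (n - k + 1),
        (-1 : ℂ) ^ (n - m - k) * (n.choose m : ℂ) * ((n - m).choose k : ℂ) *
          (m : ℂ) ^ m * (1 + (m : ℂ)) ^ (n - m - k) =
      (n.choose k : ℂ) * calT (n - k) ((k : ℂ) - n - 1) := by
  rw [calT, mul_sum]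
  refine sum_congr rfl fun m hm => ?_
  have hmk : m + k ≤ n := by
    rw [mem_range] at hm
    omega
  have hbase : ((n - k - m : ℕ) : ℂ) + ((k : ℂ) - n - 1) = -(1 + m) := by
    rw [Nat.cast_sub (by omega), Nat.cast_sub hk]
    ring
  have hchoose : (n.choose m : ℂ) * (n - m).choose k = n.choose k * (n - k).choose m := by
    exact_mod_cast Nat.choose_mul_choose_sub_comm n m k
  rw [hbase, neg_pow (1 + (m : ℂ)), Nat.sub_right_comm]
  linear_combination (m : ℂ) ^ m * (-1) ^ (n - k - m) * (1 + (m : ℂ)) ^ (n - k - m) * hchoose
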